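/- Let f : [a,b] → ℝ be regulated and g : [a,b] → ℝ be regulated and of bounded variation. Then the Young integral (Y)∫_a^b f dg and the Kurzweil–Stieltjes integral (K)∫_a^b f dg both exist and are equal. -/

import Mathlib

open Set Filter

/-- A tagged partition of `[a,b]`: points `a = pts 0 < pts 1 < … < pts n = b`
with tags `tag j ∈ [pts j, pts (j+1)]`. -/
structure TaggedPartition (a b : ℝ) where
  n : ℕ
  pts : ℕ → ℝ
  tag : ℕ → ℝ
  n_pos : 0 < n
  pts_zero : pts 0 = a
  pts_last : pts n = b
  pts_mono : ∀ j < n, pts j < pts (j + 1)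
  tag_mem : ∀ j < n, tag j ∈ Set.Icc (pts j) (pts (j + 1))

/-- Riemann–Stieltjes sum `S(f, dg, P)`. -/
def RS (f g : ℝ → ℝ) {a b : ℝ} (P : TaggedPartition a b) : ℝ :=
  ∑ j ∈ Finset.range P.n, f (P.tag j) * (g (P.pts (j + 1)) - g (P.pts j))

/-- `P` is `δ`-fine. -/
def IsFine (δ : ℝ → ℝ) {a b : ℝ} (P : TaggedPartition a b) : Prop :=
  ∀ j < P.n, Set.Icc (P.pts j) (P.pts (j + 1)) ⊆
    Set.Icc (P.tag j - δ (P.tag j)) (P.tag j + δ (P.tag j))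

/-- The Kurzweil–Stieltjes integral `(K)∫_a^b f dg` exists and equals `I`. -/
def HasKS (f g : ℝ → ℝ) (a b I : ℝ) : Prop :=
  ∀ ε > 0, ∃ δ : ℝ → ℝ, (∀ t ∈ Set.Icc a b, 0 < δ t ∧ δ t < 1) ∧
    ∀ P : TaggedPartition a b, IsFine δ P → |RS f g P - I| < ε

/-- The division of `P` contains all points of the finite set `D`. -/
def Refines {a b : ℝ} (P : TaggedPartition a b) (D : Finset ℝ) : Prop :=
  ∀ x ∈ D, ∃ j ≤ P.n, P.pts j = x

/-- All tags of `P` lie strictly inside the corresponding subintervals. -/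
def InteriorTags {a b : ℝ} (P : TaggedPartition a b) : Prop :=
  ∀ j < P.n, P.pts j < P.tag j ∧ P.tag j < P.pts (j + 1)

/-- The Dushnik integral `(D)∫_a^b f dg` exists and equals `I`. -/
def HasDushnik (f g : ℝ → ℝ) (a b I : ℝ) : Prop :=
  ∀ ε > 0, ∃ D : Finset ℝ, ↑D ⊆ Set.Icc a b ∧
    ∀ P : TaggedPartition a b, Refines P D → InteriorTags P → |RS f g P - I| < ε

/-- `f` is regulated on `[a,b]`: it has finite one-sided limits (within `[a,b]`)
at every point where they make sense. -/
def Regulated (f : ℝ → ℝ) (a b : ℝ) : Prop :=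
  (∀ t ∈ Set.Ioc a b, ∃ L : ℝ, Filter.Tendsto f (nhdsWithin t (Set.Ico a t)) (nhds L)) ∧
  (∀ t ∈ Set.Ico a b, ∃ L : ℝ, Filter.Tendsto f (nhdsWithin t (Set.Ioc t b)) (nhds L))

/-- The Young sum `S_Y(f, dg, P)`, where `gl t = g(t-)` and `gr t = g(t+)`
are the one-sided limit functions of `g`. -/
def YS (f gl gr g : ℝ → ℝ) {a b : ℝ} (P : TaggedPartition a b) : ℝ :=
  ∑ j ∈ Finset.range P.n,
    (f (P.pts j) * (gr (P.pts j) - g (P.pts j))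
      + f (P.tag j) * (gl (P.pts (j + 1)) - gr (P.pts j))
      + f (P.pts (j + 1)) * (g (P.pts (j + 1)) - gl (P.pts (j + 1))))

/-- The Young integral `(Y)∫_a^b f dg` exists and equals `I` (here `gl`, `gr`
are the one-sided limit functions of `g`). -/
def HasYoung (f gl gr g : ℝ → ℝ) (a b I : ℝ) : Prop :=
  ∀ ε > 0, ∃ D : Finset ℝ, ↑D ⊆ Set.Icc a b ∧
    ∀ P : TaggedPartition a b, Refines P D → InteriorTags P → |YS f gl gr g P - I| < ε

/-- `f` is a finite step function on `[a,b]`: constant on the open subintervals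
of some division `a = σ 0 < … < σ m = b`. -/
def IsStepFunction (f : ℝ → ℝ) (a b : ℝ) : Prop :=
  ∃ (m : ℕ) (σ : ℕ → ℝ), 0 < m ∧ σ 0 = a ∧ σ m = b ∧ (∀ k < m, σ k < σ (k + 1)) ∧
    ∀ k < m, ∀ x ∈ Set.Ioo (σ k) (σ (k + 1)), ∀ y ∈ Set.Ioo (σ k) (σ (k + 1)), f x = f y

/-- The (real-valued) total variation of `g` on `[a,b]`. -/
noncomputable def var (g : ℝ → ℝ) (a b : ℝ) : ℝ :=
  (eVariationOn g (Set.Icc a b)).toReal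

/-!
Both sums are linear in `f` and, since `g` has bounded variation, `var g a b`-Lipschitz in `f`
for the sup norm on `[a, b]` (for Young sums because the three jumps of `g` across a subinterval
are bounded by the variation of `g` on it). So the integrands whose Young and
Kurzweil–Stieltjes integrals exist and agree form a vector space closed under uniform limits.
It contains the constants and the indicators of `(c, ∞)` and `[c, ∞)`: their Young sums
telescope exactly as soon as `c` is a division point, and for a gauge forcing `c` to be a tag
their Kurzweil–Stieltjes sums differ from the same telescoping sum by a single term
`g v - g (c+)` or `g (c-) - g u` with `u`, `v` close to `c`. A regulated function is a uniform
limit of finite combinations of such indicators.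
-/

open scoped Topology

lemma Finset.abs_sum_lt_of_subsingleton_support {ι : Type*} {s : Finset ι} {E : ι → ℝ} {ε : ℝ}
    (hε : 0 < ε) (hE : ∀ i ∈ s, E i ≠ 0 → |E i| < ε)
    (huniq : ∀ i ∈ s, ∀ j ∈ s, E i ≠ 0 → E j ≠ 0 → i = j) :
    |∑ i ∈ s, E i| < ε := by
  by_cases h : ∀ i ∈ s, E i = 0
  · rwa [Finset.sum_eq_zero h, abs_zero]
  obtain ⟨i, hi, hEi⟩ : ∃ i ∈ s, E i ≠ 0 := by simpa using h
  rw [Finset.sum_eq_single_of_mem i hi fun j hj hji =>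
    by_contra fun hEj => hji (huniq j hj i hi hEj hEi)]
  exact hE i hi hEi

lemma Filter.Tendsto.exists_mem_abs_sub_le {α : Type*} {l : Filter α} {f : α → ℝ} {L : ℝ}
    (h : Tendsto f l (𝓝 L)) {ε : ℝ} (hε : 0 < ε) :
    ∃ s ∈ l, ∀ x ∈ s, ∀ y ∈ s, |f x - f y| ≤ ε := by
  refine ⟨_, h (Metric.ball_mem_nhds L (half_pos hε)), fun x hx y hy => ?_⟩
  simp only [Set.mem_preimage, Metric.mem_ball, Real.dist_eq] at hx hy
  have := abs_sub_le (f x) L (f y)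
  rw [abs_sub_comm L] at this
  linarith

lemma exists_tendsto_of_tendstoUniformly {α E : Type*} [PseudoMetricSpace E] [CompleteSpace E]
    {l : Filter α} [l.NeBot] {F : ℕ → α → E} {s : α → E} {L : ℕ → E}
    (hF : TendstoUniformly F s atTop) (hL : ∀ n, Tendsto (F n) l (𝓝 (L n))) :
    ∃ I, Tendsto L atTop (𝓝 I) ∧ Tendsto s l (𝓝 I) := by
  have hcauchy : CauchySeq L := by
    rw [Metric.cauchySeq_iff]
    intro ε hε
    obtain ⟨N, hN⟩ := Metric.uniformCauchySeqOn_iff.mp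
      (tendstoUniformlyOn_univ.mpr hF).uniformCauchySeqOn (ε / 2) (half_pos hε)
    refine ⟨N, fun m hm n hn => ?_⟩
    have : dist (L m) (L n) ≤ ε / 2 := le_of_tendsto ((hL m).dist (hL n))
      (.of_forall fun x => (hN m hm n hn x (mem_univ x)).le)
    linarith
  obtain ⟨I, hI⟩ := cauchySeq_tendsto_of_complete hcauchy
  exact ⟨I, hI, hF.tendsto_of_eventually_tendsto (.of_forall hL) hI⟩

lemma tendstoUniformly_of_abs_sub_le {ι α : Type*} {p : Filter ι} {F : ι → α → ℝ} {s : α → ℝ}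
    {e : ι → ℝ} (he : Tendsto e p (𝓝 0)) (h : ∀ i x, |s x - F i x| ≤ e i) :
    TendstoUniformly F s p :=
  Metric.tendstoUniformly_iff.mpr fun _ hε =>
    (he.eventually (gt_mem_nhds hε)).mono fun i hi x => (h i x).trans_lt hi

lemma real_induction {a b : ℝ} {p : ℝ → Prop} (hab : a ≤ b) (ha : p a)
    (hright : ∀ t ∈ Ico a b, p t → ∃ t' ∈ Ioc t b, p t')
    (hleft : ∀ c ∈ Ioc a b, ∃ d < c, ∀ t ∈ Ico d c, a ≤ t → p t → p c) : p b := by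
  set S : Set ℝ := {t | t ∈ Icc a b ∧ p t}
  have hne : S.Nonempty := ⟨a, ⟨le_rfl, hab⟩, ha⟩
  have hbdd : BddAbove S := ⟨b, fun t ht => ht.1.2⟩
  have hac : a ≤ sSup S := le_csSup hbdd ⟨⟨le_rfl, hab⟩, ha⟩
  have hcb : sSup S ≤ b := csSup_le hne fun t ht => ht.1.2
  have hc : p (sSup S) := by
    rcases hac.eq_or_lt with hac | hac
    · rwa [← hac]
    obtain ⟨d, hdc, hd⟩ := hleft _ ⟨hac, hcb⟩
    obtain ⟨t, ht, htc⟩ := exists_lt_of_lt_csSup hne (max_lt hdc hac)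
    rcases (le_csSup hbdd ht).eq_or_lt with htc' | htc'
    · rw [← htc']
      exact ht.2
    · exact hd t ⟨(le_max_left _ _).trans htc.le, htc'⟩ ht.1.1 ht.2
  rcases hcb.eq_or_lt with hcb | hcb
  · rwa [← hcb]
  obtain ⟨t', ht', hpt'⟩ := hright _ ⟨hac, hcb⟩ hc
  exact absurd (le_csSup hbdd ⟨⟨hac.trans ht'.1.le, ht'.2⟩, hpt'⟩) (not_le.mpr ht'.1)

namespace TaggedPartition

variable {a b : ℝ} (P : TaggedPartition a b)

lemma pts_le_pts {i j : ℕ} (hij : i ≤ j) (hj : j ≤ P.n) : P.pts i ≤ P.pts j :=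
  (strictMonoOn_Iic_of_lt_succ fun k hk => P.pts_mono k hk).monotoneOn
    (mem_Iic.mpr (hij.trans hj)) (mem_Iic.mpr hj) hij

lemma pts_mem_Icc {j : ℕ} (hj : j ≤ P.n) : P.pts j ∈ Icc a b :=
  ⟨by simpa only [P.pts_zero] using P.pts_le_pts j.zero_le hj,
    by simpa only [P.pts_last] using P.pts_le_pts hj le_rfl⟩

lemma tag_mem_Icc {j : ℕ} (hj : j < P.n) : P.tag j ∈ Icc a b :=
  ⟨(P.pts_mem_Icc hj.le).1.trans (P.tag_mem j hj).1, (P.tag_mem j hj).2.trans (P.pts_mem_Icc hj).2⟩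

lemma sum_sub_pts (H : ℝ → ℝ) :
    ∑ j ∈ Finset.range P.n, (H (P.pts (j + 1)) - H (P.pts j)) = H b - H a := by
  rw [Finset.sum_range_sub (fun j => H (P.pts j)), P.pts_last, P.pts_zero]

lemma eq_of_mem_Ico {x : ℝ} {i j : ℕ} (hi : i < P.n) (hj : j < P.n)
    (hxi : x ∈ Ico (P.pts i) (P.pts (i + 1))) (hxj : x ∈ Ico (P.pts j) (P.pts (j + 1))) :
    i = j := by
  by_contra hne
  rcases Nat.lt_or_gt_of_ne hne with h | h
  · linarith [P.pts_le_pts h hj.le, hxi.2, hxj.1]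
  · linarith [P.pts_le_pts h hi.le, hxi.1, hxj.2]

lemma eq_of_mem_Ioc {x : ℝ} {i j : ℕ} (hi : i < P.n) (hj : j < P.n)
    (hxi : x ∈ Ioc (P.pts i) (P.pts (i + 1))) (hxj : x ∈ Ioc (P.pts j) (P.pts (j + 1))) :
    i = j := by
  by_contra hne
  rcases Nat.lt_or_gt_of_ne hne with h | h
  · linarith [P.pts_le_pts h hj.le, hxi.2, hxj.1]
  · linarith [P.pts_le_pts h hi.le, hxi.1, hxj.2]

lemma pts_succ_le_or_le_pts {c : ℝ} (h : Refines P {c}) {j : ℕ} (hj : j < P.n) :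
    P.pts (j + 1) ≤ c ∨ c ≤ P.pts j := by
  obtain ⟨i, hi, rfl⟩ := h c (Finset.mem_singleton_self c)
  rcases le_or_gt i j with hij | hij
  · exact Or.inr (P.pts_le_pts hij hj.le)
  · exact Or.inl (P.pts_le_pts hij hi)

end TaggedPartition

section Sums

variable {a b : ℝ} (P : TaggedPartition a b) (g gl gr : ℝ → ℝ)

lemma RS_add (f₁ f₂ : ℝ → ℝ) : RS (f₁ + f₂) g P = RS f₁ g P + RS f₂ g P := by
  simp only [RS, Pi.add_apply, add_mul, Finset.sum_add_distrib]

lemma RS_sub (f₁ f₂ : ℝ → ℝ) : RS (f₁ - f₂) g P = RS f₁ g P - RS f₂ g P := by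
  simp only [RS, Pi.sub_apply, sub_mul, Finset.sum_sub_distrib]

lemma RS_smul (k : ℝ) (f : ℝ → ℝ) : RS (k • f) g P = k * RS f g P := by
  simp only [RS, Pi.smul_apply, smul_eq_mul, Finset.mul_sum, mul_assoc]

lemma RS_const (k : ℝ) : RS (fun _ => k) g P = k * (g b - g a) := by
  rw [RS, ← Finset.mul_sum, P.sum_sub_pts]

lemma YS_add (f₁ f₂ : ℝ → ℝ) : YS (f₁ + f₂) gl gr g P = YS f₁ gl gr g P + YS f₂ gl gr g P := by
  simp only [YS, ← Finset.sum_add_distrib, Pi.add_apply]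
  exact Finset.sum_congr rfl fun _ _ => by ring

lemma YS_sub (f₁ f₂ : ℝ → ℝ) : YS (f₁ - f₂) gl gr g P = YS f₁ gl gr g P - YS f₂ gl gr g P := by
  simp only [YS, ← Finset.sum_sub_distrib, Pi.sub_apply]
  exact Finset.sum_congr rfl fun _ _ => by ring

lemma YS_smul (k : ℝ) (f : ℝ → ℝ) : YS (k • f) gl gr g P = k * YS f gl gr g P := by
  simp only [YS, Finset.mul_sum, Pi.smul_apply, smul_eq_mul]
  exact Finset.sum_congr rfl fun _ _ => by ring

lemma YS_const (k : ℝ) : YS (fun _ => k) gl gr g P = k * (g b - g a) := by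
  rw [YS, ← P.sum_sub_pts, Finset.mul_sum]
  exact Finset.sum_congr rfl fun _ _ => by ring

end Sums

section Variation

variable {g : ℝ → ℝ}

lemma var_add {u v w : ℝ} (hg : BoundedVariationOn g (Icc u w)) (huv : u ≤ v) (hvw : v ≤ w) :
    var g u v + var g v w = var g u w := by
  have h := eVariationOn.Icc_add_Icc g huv hvw (mem_univ v)
  simp only [univ_inter] at h
  rw [var, var, var, ← h, ENNReal.toReal_add (hg.mono (Icc_subset_Icc_right hvw))
    (hg.mono (Icc_subset_Icc_left huv))]

lemma abs_sub_le_var {u v x y : ℝ} (hg : BoundedVariationOn g (Icc u v)) (hx : x ∈ Icc u v)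
    (hy : y ∈ Icc u v) : |g x - g y| ≤ var g u v := by
  rw [← Real.dist_eq, dist_edist]
  exact ENNReal.toReal_mono hg (eVariationOn.edist_le g hx hy)

lemma sum_var_pts {a b : ℝ} (hg : BoundedVariationOn g (Icc a b)) (P : TaggedPartition a b) :
    ∑ j ∈ Finset.range P.n, var g (P.pts j) (P.pts (j + 1)) = var g a b := by
  suffices h : ∀ k ≤ P.n, ∑ j ∈ Finset.range k, var g (P.pts j) (P.pts (j + 1)) = var g a (P.pts k)
    by simpa [P.pts_last] using h P.n le_rfl
  intro k hk
  induction k with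
  | zero => simp [P.pts_zero, var, eVariationOn.subsingleton]
  | succ k ih =>
    rw [Finset.sum_range_succ, ih (by omega), var_add (hg.mono (Icc_subset_Icc_right
      (P.pts_mem_Icc hk).2)) (P.pts_mem_Icc (by omega)).1 (P.pts_le_pts k.le_succ hk)]

/-- The three jumps of `g` across `[u, v]` are the limits of the increments of `g` along
`u < s < w < v` as `s → u⁺`, `w → v⁻`. -/
lemma abs_jumps_le_var {gl gr : ℝ → ℝ} {u v : ℝ} (hg : BoundedVariationOn g (Icc u v))
    (huv : u < v) (hr : Tendsto g (𝓝[>] u) (𝓝 (gr u))) (hl : Tendsto g (𝓝[<] v) (𝓝 (gl v))) :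
    |gr u - g u| + |gl v - gr u| + |g v - gl v| ≤ var g u v := by
  have hinner : ∀ s ∈ Ioo u v, ∀ w ∈ Ioo s v,
      |g s - g u| + |g w - g s| + |g v - g w| ≤ var g u v := by
    intro s hs w hw
    have hsv : BoundedVariationOn g (Icc s v) := hg.mono (Icc_subset_Icc_left hs.1.le)
    rw [← var_add hg hs.1.le hs.2.le, ← var_add hsv hw.1.le hw.2.le, add_assoc]
    gcongr
    exacts [abs_sub_le_var (hg.mono (Icc_subset_Icc_right hs.2.le)) ⟨hs.1.le, le_rfl⟩
        ⟨le_rfl, hs.1.le⟩,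
      abs_sub_le_var (hsv.mono (Icc_subset_Icc_right hw.2.le)) ⟨hw.1.le, le_rfl⟩
        ⟨le_rfl, hw.1.le⟩,
      abs_sub_le_var (hsv.mono (Icc_subset_Icc_left hw.1.le)) ⟨hw.2.le, le_rfl⟩
        ⟨le_rfl, hw.2.le⟩]
  have hmid : ∀ s ∈ Ioo u v, |g s - g u| + |gl v - g s| + |g v - gl v| ≤ var g u v :=
    fun s hs => le_of_tendsto (((hl.sub_const _).abs.const_add _).add (hl.const_sub _).abs)
      (Filter.mem_of_superset (Ioo_mem_nhdsLT hs.2) fun w hw => hinner s hs w hw)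
  exact le_of_tendsto ((((hr.sub_const _).abs.add (hr.const_sub _).abs)).add_const _)
    (Filter.mem_of_superset (Ioo_mem_nhdsGT huv) hmid)

end Variation

section SumBounds

variable {a b ε : ℝ} {f g gl gr : ℝ → ℝ}

lemma abs_RS_le (hg : BoundedVariationOn g (Icc a b)) (P : TaggedPartition a b)
    (hf : ∀ x ∈ Icc a b, |f x| ≤ ε) : |RS f g P| ≤ ε * var g a b := by
  rw [← sum_var_pts hg P, Finset.mul_sum]
  refine (Finset.abs_sum_le_sum_abs _ _).trans (Finset.sum_le_sum fun j hj => ?_)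
  have hj : j < P.n := Finset.mem_range.mp hj
  have hu := P.pts_mem_Icc hj.le
  have hv := P.pts_mem_Icc hj
  have hξ := P.tag_mem_Icc hj
  rw [abs_mul]
  exact mul_le_mul (hf _ hξ) (abs_sub_le_var (hg.mono (Icc_subset_Icc hu.1 hv.2))
    ⟨(P.pts_mono j hj).le, le_rfl⟩ ⟨le_rfl, (P.pts_mono j hj).le⟩) (abs_nonneg _)
    ((abs_nonneg _).trans (hf _ hξ))

lemma abs_YS_le (hg : BoundedVariationOn g (Icc a b))
    (hgl : ∀ t ∈ Ioc a b, Tendsto g (𝓝[<] t) (𝓝 (gl t)))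
    (hgr : ∀ t ∈ Ico a b, Tendsto g (𝓝[>] t) (𝓝 (gr t))) (P : TaggedPartition a b)
    (hf : ∀ x ∈ Icc a b, |f x| ≤ ε) : |YS f gl gr g P| ≤ ε * var g a b := by
  rw [← sum_var_pts hg P, Finset.mul_sum]
  refine (Finset.abs_sum_le_sum_abs _ _).trans (Finset.sum_le_sum fun j hj => ?_)
  have hj : j < P.n := Finset.mem_range.mp hj
  set u := P.pts j
  set v := P.pts (j + 1)
  have hu : u ∈ Icc a b := P.pts_mem_Icc hj.le
  have hv : v ∈ Icc a b := P.pts_mem_Icc hj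
  have huv : u < v := P.pts_mono j hj
  have hjumps := abs_jumps_le_var (hg.mono (Icc_subset_Icc hu.1 hv.2)) huv
    (hgr u ⟨hu.1, huv.trans_le hv.2⟩) (hgl v ⟨hu.1.trans_lt huv, hv.2⟩)
  have hε : 0 ≤ ε := (abs_nonneg (f u)).trans (hf u hu)
  have h₁ := mul_le_mul_of_nonneg_right (hf u hu) (abs_nonneg (gr u - g u))
  have h₂ := mul_le_mul_of_nonneg_right (hf _ (P.tag_mem_Icc hj)) (abs_nonneg (gl v - gr u))
  have h₃ := mul_le_mul_of_nonneg_right (hf v hv) (abs_nonneg (g v - gl v))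
  calc |f u * (gr u - g u) + f (P.tag j) * (gl v - gr u) + f v * (g v - gl v)|
      ≤ |f u| * |gr u - g u| + |f (P.tag j)| * |gl v - gr u| + |f v| * |g v - gl v| := by
        simpa only [abs_mul] using abs_add_three (f u * (gr u - g u))
          (f (P.tag j) * (gl v - gr u)) (f v * (g v - gl v))
    _ ≤ ε * (|gr u - g u| + |gl v - gr u| + |g v - gl v|) := by linarith
    _ ≤ ε * var g u v := mul_le_mul_of_nonneg_left hjumps hε

end SumBounds

section Filters

variable {a b : ℝ}

lemma exists_refines_interiorTags (hab : a < b) (D : Finset ℝ) (hD : (D : Set ℝ) ⊆ Icc a b) :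
    ∃ P : TaggedPartition a b, Refines P D ∧ InteriorTags P := by
  classical
  set s := insert a (insert b D)
  have hs : ∀ x ∈ s, x ∈ Icc a b := by
    simpa [s, hab.le] using fun x hx => hD hx
  have hk : 2 ≤ s.card := Finset.one_lt_card.mpr ⟨a, by simp [s], b, by simp [s], hab.ne⟩
  set e := s.orderEmbOfFin rfl
  set x : ℕ → ℝ := fun j => e ⟨min j (s.card - 1), by omega⟩
  have hx_lt : ∀ i j, i < j → j ≤ s.card - 1 → x i < x j := fun i j hij hj =>
    e.strictMono (Fin.mk_lt_mk.mpr (by omega))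
  have hx0 : x 0 = a := by
    simp only [x, Nat.zero_min]
    rw [Finset.orderEmbOfFin_zero rfl (by omega)]
    exact le_antisymm (s.min'_le a (by simp [s])) ((hs _ (s.min'_mem _)).1)
  have hxn : x (s.card - 1) = b := by
    simp only [x, min_self]
    rw [Finset.orderEmbOfFin_last rfl (by omega)]
    exact le_antisymm ((hs _ (s.max'_mem _)).2) (s.le_max' b (by simp [s]))
  have hmid : ∀ j < s.card - 1,
      x j < (x j + x (j + 1)) / 2 ∧ (x j + x (j + 1)) / 2 < x (j + 1) := fun j hj => by
    have := hx_lt j (j + 1) j.lt_succ_self hj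
    constructor <;> linarith
  refine ⟨⟨s.card - 1, x, fun j => (x j + x (j + 1)) / 2, by omega, hx0, hxn,
    fun j hj => hx_lt j (j + 1) j.lt_succ_self hj,
    fun j hj => ⟨(hmid j hj).1.le, (hmid j hj).2.le⟩⟩, fun y hy => ?_, hmid⟩
  obtain ⟨i, rfl⟩ : y ∈ range e := by
    rw [Finset.range_orderEmbOfFin]
    simp [s, hy]
  exact ⟨i, Nat.le_sub_one_of_lt i.2, by simp only [x]; congr; omega⟩

def youngFilter (a b : ℝ) : Filter (TaggedPartition a b) :=
  ⨅ D ∈ {D : Finset ℝ | (D : Set ℝ) ⊆ Icc a b}, 𝓟 {P | Refines P D ∧ InteriorTags P}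

def ksFilter (a b : ℝ) : Filter (TaggedPartition a b) :=
  ⨅ δ ∈ {δ : ℝ → ℝ | ∀ t ∈ Icc a b, 0 < δ t ∧ δ t < 1}, 𝓟 {P | IsFine δ P}

lemma hasBasis_youngFilter :
    (youngFilter a b).HasBasis (fun D : Finset ℝ => (D : Set ℝ) ⊆ Icc a b)
      fun D => {P | Refines P D ∧ InteriorTags P} := by
  classical
  refine hasBasis_biInf_principal (fun D₁ h₁ D₂ h₂ => ⟨D₁ ∪ D₂, ?_, ?_, ?_⟩) ⟨∅, by simp⟩
  · simpa [Finset.coe_union] using And.intro h₁ h₂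
  · exact fun P hP => ⟨fun x hx => hP.1 x (Finset.mem_union_left _ hx), hP.2⟩
  · exact fun P hP => ⟨fun x hx => hP.1 x (Finset.mem_union_right _ hx), hP.2⟩

lemma hasBasis_ksFilter :
    (ksFilter a b).HasBasis (fun δ : ℝ → ℝ => ∀ t ∈ Icc a b, 0 < δ t ∧ δ t < 1)
      fun δ => {P | IsFine δ P} := by
  refine hasBasis_biInf_principal (fun δ₁ h₁ δ₂ h₂ => ⟨δ₁ ⊓ δ₂, fun t ht => ?_, ?_, ?_⟩)
    ⟨fun _ => 1 / 2, fun _ _ => by norm_num⟩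
  · exact ⟨lt_min (h₁ t ht).1 (h₂ t ht).1, (min_le_left _ _).trans_lt (h₁ t ht).2⟩
  · refine fun P hP j hj => (hP j hj).trans (Icc_subset_Icc ?_ ?_) <;>
      simp only [Pi.inf_apply] <;> linarith [min_le_left (δ₁ (P.tag j)) (δ₂ (P.tag j))]
  · refine fun P hP j hj => (hP j hj).trans (Icc_subset_Icc ?_ ?_) <;>
      simp only [Pi.inf_apply] <;> linarith [min_le_right (δ₁ (P.tag j)) (δ₂ (P.tag j))]

lemma youngFilter_neBot (hab : a < b) : (youngFilter a b).NeBot :=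
  hasBasis_youngFilter.neBot_iff.mpr fun {D} hD => exists_refines_interiorTags hab D hD

lemma hasYoung_iff_tendsto {f g gl gr : ℝ → ℝ} {I : ℝ} :
    HasYoung f gl gr g a b I ↔
      Tendsto (fun P : TaggedPartition a b => YS f gl gr g P) (youngFilter a b) (𝓝 I) := by
  rw [hasBasis_youngFilter.tendsto_iff Metric.nhds_basis_ball]
  simp only [HasYoung, Set.mem_ofPred_eq, Metric.mem_ball, Real.dist_eq, and_imp]

lemma hasKS_iff_tendsto {f g : ℝ → ℝ} {I : ℝ} :
    HasKS f g a b I ↔ Tendsto (fun P : TaggedPartition a b => RS f g P) (ksFilter a b) (𝓝 I) := by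
  rw [hasBasis_ksFilter.tendsto_iff Metric.nhds_basis_ball]
  simp only [HasKS, Set.mem_ofPred_eq, Metric.mem_ball, Real.dist_eq]

lemma eventually_refines_singleton {c : ℝ} (hc : c ∈ Icc a b) :
    ∀ᶠ P in youngFilter a b, Refines P {c} ∧ InteriorTags P :=
  hasBasis_youngFilter.eventually_iff.mpr ⟨{c}, by simpa using hc, fun _ h => h⟩

/-- Off `c` the gauge stays below `|t - c| / 2`, so a subinterval containing `c` cannot be
tagged anywhere else. -/
lemma eventually_tag_eq (c : ℝ) {d : ℝ} (hd : 0 < d) :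
    ∀ᶠ P in ksFilter a b, ∀ j < P.n, c ∈ Icc (P.pts j) (P.pts (j + 1)) →
      P.tag j = c ∧ c - d ≤ P.pts j ∧ P.pts (j + 1) ≤ c + d := by
  refine hasBasis_ksFilter.eventually_iff.mpr
    ⟨fun t => if t = c then min d (1 / 2) else min (|t - c| / 2) (1 / 2), fun t _ => ?_,
      fun P hP j hj hc => ?_⟩
  · dsimp only
    split_ifs with h
    · exact ⟨lt_min hd (by norm_num), (min_le_right _ _).trans_lt (by norm_num)⟩
    · exact ⟨lt_min (by positivity [sub_ne_zero.mpr h]) (by norm_num),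
        (min_le_right _ _).trans_lt (by norm_num)⟩
  have hsub := hP j hj
  have hξ : P.tag j = c := by
    by_contra hne
    have hcξ := hsub hc
    simp only [if_neg hne] at hcξ
    have hδ := min_le_left (|P.tag j - c| / 2) (1 / 2)
    have hpos : 0 < |P.tag j - c| := abs_pos.mpr (sub_ne_zero.mpr hne)
    have : |P.tag j - c| ≤ |P.tag j - c| / 2 := by
      rw [abs_le]; constructor <;> linarith [hcξ.1, hcξ.2]
    linarith
  have hu := hsub ⟨le_rfl, (P.pts_mono j hj).le⟩
  have hv := hsub ⟨(P.pts_mono j hj).le, le_rfl⟩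
  simp only [hξ, ↓reduceIte] at hu hv
  have hδ := min_le_left d (1 / 2)
  exact ⟨hξ, by linarith [hu.1], by linarith [hv.2]⟩

end Filters

def HasYoungKS (g gl gr : ℝ → ℝ) (a b : ℝ) (f : ℝ → ℝ) (I : ℝ) : Prop :=
  Tendsto (fun P : TaggedPartition a b => YS f gl gr g P) (youngFilter a b) (𝓝 I) ∧
    Tendsto (fun P : TaggedPartition a b => RS f g P) (ksFilter a b) (𝓝 I)

namespace HasYoungKS

variable {a b : ℝ} {g gl gr f f₁ f₂ : ℝ → ℝ} {I I₁ I₂ : ℝ}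

lemma add (h₁ : HasYoungKS g gl gr a b f₁ I₁) (h₂ : HasYoungKS g gl gr a b f₂ I₂) :
    HasYoungKS g gl gr a b (f₁ + f₂) (I₁ + I₂) :=
  ⟨by simpa only [YS_add] using h₁.1.add h₂.1, by simpa only [RS_add] using h₁.2.add h₂.2⟩

lemma smul (k : ℝ) (h : HasYoungKS g gl gr a b f I) : HasYoungKS g gl gr a b (k • f) (k * I) :=
  ⟨by simpa only [YS_smul] using h.1.const_mul k, by simpa only [RS_smul] using h.2.const_mul k⟩

end HasYoungKS

section Basic

variable {a b : ℝ} {g gl gr : ℝ → ℝ}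

lemma hasYoungKS_const (k : ℝ) : HasYoungKS g gl gr a b (fun _ => k) (k * (g b - g a)) :=
  ⟨by simpa only [YS_const] using tendsto_const_nhds,
    by simpa only [RS_const] using tendsto_const_nhds⟩

lemma young_term_indicator_Ioi {c u ξ v : ℝ} (huξ : u < ξ) (hξv : ξ < v) (hc : v ≤ c ∨ c ≤ u) :
    (Ioi c).indicator 1 u * (gr u - g u) + (Ioi c).indicator 1 ξ * (gl v - gr u)
        + (Ioi c).indicator 1 v * (g v - gl v)
      = (Ioi c).indicator (fun x => g x - gr c) v - (Ioi c).indicator (fun x => g x - gr c) u := by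
  simp only [indicator_apply, mem_Ioi, Pi.one_apply]
  rcases hc with hvc | hcu
  · simp [not_lt.mpr hvc, not_lt.mpr (hξv.le.trans hvc), not_lt.mpr ((huξ.trans hξv).le.trans hvc)]
  · obtain rfl | hcu := hcu.eq_or_lt
    · simp [huξ, huξ.trans hξv]
    · simp [hcu, hcu.trans huξ, (hcu.trans huξ).trans hξv]

lemma young_term_indicator_Ici {c u ξ v : ℝ} (huξ : u < ξ) (hξv : ξ < v) (hc : v ≤ c ∨ c ≤ u) :
    (Ici c).indicator 1 u * (gr u - g u) + (Ici c).indicator 1 ξ * (gl v - gr u)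
        + (Ici c).indicator 1 v * (g v - gl v)
      = (Ici c).indicator (fun x => g x - gl c) v - (Ici c).indicator (fun x => g x - gl c) u := by
  simp only [indicator_apply, mem_Ici, Pi.one_apply]
  rcases hc with hvc | hcu
  · obtain rfl | hvc := hvc.eq_or_lt
    · simp [not_le.mpr (huξ.trans hξv), not_le.mpr hξv]
    · simp [not_le.mpr hvc, not_le.mpr (hξv.trans hvc), not_le.mpr ((huξ.trans hξv).trans hvc)]
  · simp [hcu, hcu.trans huξ.le, hcu.trans (huξ.trans hξv).le]

lemma ks_term_indicator_Ioi {c u ξ v : ℝ} (huξ : u ≤ ξ) (hξv : ξ ≤ v) (hξ : c ∈ Icc u v → ξ = c) :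
    (Ioi c).indicator 1 ξ * (g v - g u)
        - ((Ioi c).indicator (fun x => g x - gr c) v - (Ioi c).indicator (fun x => g x - gr c) u)
      = if c ∈ Ico u v then gr c - g v else 0 := by
  simp only [indicator_apply, mem_Ioi, mem_Ico, Pi.one_apply]
  by_cases hcu : c < u
  · simp [hcu, hcu.trans_le huξ, hcu.trans_le (huξ.trans hξv), not_le.mpr hcu]
  by_cases hcv : c < v
  · simp [hξ ⟨not_lt.mp hcu, hcv.le⟩, hcu, hcv, not_lt.mp hcu]
  · simp [hcv, not_lt.mpr ((not_lt.mp hcv).trans' hξv), hcu]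

lemma ks_term_indicator_Ici {c u ξ v : ℝ} (huξ : u ≤ ξ) (hξv : ξ ≤ v) (hξ : c ∈ Icc u v → ξ = c) :
    (Ici c).indicator 1 ξ * (g v - g u)
        - ((Ici c).indicator (fun x => g x - gl c) v - (Ici c).indicator (fun x => g x - gl c) u)
      = if c ∈ Ioc u v then gl c - g u else 0 := by
  simp only [indicator_apply, mem_Ici, mem_Ioc, Pi.one_apply]
  by_cases hcv : v < c
  · simp [not_le.mpr hcv, not_le.mpr (hξv.trans_lt hcv), not_le.mpr ((huξ.trans hξv).trans_lt hcv)]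
  by_cases hcu : u < c
  · simp [hξ ⟨hcu.le, not_lt.mp hcv⟩, hcu, not_lt.mp hcv, not_le.mpr hcu]
  · simp [hcu, (not_lt.mp hcu).trans huξ, (not_lt.mp hcu).trans (huξ.trans hξv), not_lt.mp hcu]

end Basic

section Indicators

variable {a b : ℝ} {g gl gr : ℝ → ℝ}

lemma hasYoungKS_indicator_Ioi {c : ℝ} (hc : c ∈ Ico a b) (hgr : Tendsto g (𝓝[>] c) (𝓝 (gr c))) :
    HasYoungKS g gl gr a b ((Ioi c).indicator 1) (g b - gr c) := by
  set H := (Ioi c).indicator fun x => g x - gr c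
  have hH : H b - H a = g b - gr c := by simp [H, hc.2, not_lt.mpr hc.1]
  refine ⟨tendsto_const_nhds.congr' ?_, Metric.tendsto_nhds.mpr fun ε hε => ?_⟩
  · filter_upwards [eventually_refines_singleton (Ico_subset_Icc_self hc)] with P hP
    rw [← hH, ← P.sum_sub_pts H, YS]
    refine Finset.sum_congr rfl fun j hj => (young_term_indicator_Ioi ?_ ?_ ?_).symm
    exacts [(hP.2 j (Finset.mem_range.mp hj)).1, (hP.2 j (Finset.mem_range.mp hj)).2,
      P.pts_succ_le_or_le_pts hP.1 (Finset.mem_range.mp hj)]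
  obtain ⟨u, hcu, hsmall⟩ :=
    mem_nhdsGT_iff_exists_Ioc_subset.mp (Metric.tendsto_nhds.mp hgr ε hε)
  filter_upwards [eventually_tag_eq c (sub_pos.mpr hcu)] with P hP
  rw [Real.dist_eq, ← hH, ← P.sum_sub_pts H, RS, ← Finset.sum_sub_distrib,
    Finset.sum_congr rfl fun j hj => ks_term_indicator_Ioi (P.tag_mem j (Finset.mem_range.mp hj)).1
      (P.tag_mem j (Finset.mem_range.mp hj)).2 fun h => (hP j (Finset.mem_range.mp hj) h).1]
  refine Finset.abs_sum_lt_of_subsingleton_support hε (fun j hj hne => ?_)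
    fun i hi j hj hi0 hj0 => P.eq_of_mem_Ico (Finset.mem_range.mp hi) (Finset.mem_range.mp hj)
      (ite_ne_right_iff.mp hi0).1 (ite_ne_right_iff.mp hj0).1
  have hcj := (ite_ne_right_iff.mp hne).1
  have hv := (hP j (Finset.mem_range.mp hj) (Ico_subset_Icc_self hcj)).2.2
  rw [if_pos hcj, abs_sub_comm, ← Real.dist_eq]
  exact hsmall ⟨hcj.2, by linarith⟩

lemma hasYoungKS_indicator_Ici {c : ℝ} (hc : c ∈ Ioc a b) (hgl : Tendsto g (𝓝[<] c) (𝓝 (gl c))) :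
    HasYoungKS g gl gr a b ((Ici c).indicator 1) (g b - gl c) := by
  set H := (Ici c).indicator fun x => g x - gl c
  have hH : H b - H a = g b - gl c := by simp [H, hc.2, not_le.mpr hc.1]
  refine ⟨tendsto_const_nhds.congr' ?_, Metric.tendsto_nhds.mpr fun ε hε => ?_⟩
  · filter_upwards [eventually_refines_singleton (Ioc_subset_Icc_self hc)] with P hP
    rw [← hH, ← P.sum_sub_pts H, YS]
    refine Finset.sum_congr rfl fun j hj => (young_term_indicator_Ici ?_ ?_ ?_).symm
    exacts [(hP.2 j (Finset.mem_range.mp hj)).1, (hP.2 j (Finset.mem_range.mp hj)).2,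
      P.pts_succ_le_or_le_pts hP.1 (Finset.mem_range.mp hj)]
  obtain ⟨l, hlc, hsmall⟩ :=
    mem_nhdsLT_iff_exists_Ico_subset.mp (Metric.tendsto_nhds.mp hgl ε hε)
  filter_upwards [eventually_tag_eq c (sub_pos.mpr hlc)] with P hP
  rw [Real.dist_eq, ← hH, ← P.sum_sub_pts H, RS, ← Finset.sum_sub_distrib,
    Finset.sum_congr rfl fun j hj => ks_term_indicator_Ici (P.tag_mem j (Finset.mem_range.mp hj)).1
      (P.tag_mem j (Finset.mem_range.mp hj)).2 fun h => (hP j (Finset.mem_range.mp hj) h).1]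
  refine Finset.abs_sum_lt_of_subsingleton_support hε (fun j hj hne => ?_)
    fun i hi j hj hi0 hj0 => P.eq_of_mem_Ioc (Finset.mem_range.mp hi) (Finset.mem_range.mp hj)
      (ite_ne_right_iff.mp hi0).1 (ite_ne_right_iff.mp hj0).1
  have hcj := (ite_ne_right_iff.mp hne).1
  have hu := (hP j (Finset.mem_range.mp hj) (Ioc_subset_Icc_self hcj)).2.1
  rw [if_pos hcj, abs_sub_comm, ← Real.dist_eq]
  exact hsmall ⟨by linarith, hcj.1⟩

end Indicators

section Approximation

variable {a b : ℝ} {f g gl gr : ℝ → ℝ}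

lemma exists_hasYoungKS_update {φ : ℝ → ℝ} {I C t t' : ℝ} (hφ : HasYoungKS g gl gr a b φ I)
    (hC : ∀ x > t, φ x = C) (hat : a ≤ t) (htt' : t < t') (ht'b : t' ≤ b)
    (hgr : Tendsto g (𝓝[>] t) (𝓝 (gr t))) (hgl : Tendsto g (𝓝[<] t') (𝓝 (gl t'))) (y z : ℝ) :
    ∃ ψ J, HasYoungKS g gl gr a b ψ J ∧ (∀ x ≤ t, ψ x = φ x) ∧ (∀ x ∈ Ioo t t', ψ x = y) ∧
      ∀ x ≥ t', ψ x = z := by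
  refine ⟨_, _, (hφ.add ((hasYoungKS_indicator_Ioi ⟨hat, htt'.trans_le ht'b⟩ hgr).smul (y - C))).add
    ((hasYoungKS_indicator_Ici ⟨hat.trans_lt htt', ht'b⟩ hgl).smul (z - y)),
    fun x hx => ?_, fun x hx => ?_, fun x hx => ?_⟩
  · simp [not_lt.mpr hx, not_le.mpr (hx.trans_lt htt')]
  · simp [hC x hx.1, hx.1, not_le.mpr hx.2]
  · simp [hC x (htt'.trans_le hx), htt'.trans_le hx, hx]

/-- The approximant is built from left to right by real induction: each step appends, on an
interval where `f` oscillates by at most `ε`, a step as in `exists_hasYoungKS_update`. -/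
lemma Regulated.exists_hasYoungKS_approx (hf : Regulated f a b) (hab : a ≤ b)
    (hgl : ∀ t ∈ Ioc a b, Tendsto g (𝓝[<] t) (𝓝 (gl t)))
    (hgr : ∀ t ∈ Ico a b, Tendsto g (𝓝[>] t) (𝓝 (gr t))) {ε : ℝ} (hε : 0 < ε) :
    ∃ φ I, HasYoungKS g gl gr a b φ I ∧ ∀ x ∈ Icc a b, |f x - φ x| ≤ ε := by
  let p : ℝ → Prop := fun t => ∃ φ I C, HasYoungKS g gl gr a b φ I ∧
    (∀ x ∈ Icc a t, |f x - φ x| ≤ ε) ∧ ∀ x > t, φ x = C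
  have hstep : ∀ t t', a ≤ t → t < t' → t' ≤ b →
      (∀ x ∈ Ioo t t', ∀ y ∈ Ioo t t', |f x - f y| ≤ ε) → p t → p t' := by
    rintro t t' hat htt' ht'b hosc ⟨φ, I, C, hφ, happrox, hC⟩
    obtain ⟨ψ, J, hψ, hleft, hmid, hright⟩ := exists_hasYoungKS_update hφ hC hat htt' ht'b
      (hgr t ⟨hat, htt'.trans_le ht'b⟩) (hgl t' ⟨hat.trans_lt htt', ht'b⟩) (f ((t + t') / 2)) (f t')
    refine ⟨ψ, J, f t', hψ, fun x hx => ?_, fun x hx => hright x hx.le⟩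
    rcases le_or_gt x t with hxt | hxt
    · rw [hleft x hxt]
      exact happrox x ⟨hx.1, hxt⟩
    rcases hx.2.lt_or_eq with hxt' | rfl
    · rw [hmid x ⟨hxt, hxt'⟩]
      exact hosc x ⟨hxt, hxt'⟩ _ ⟨by linarith, by linarith⟩
    · rw [hright x le_rfl, sub_self, abs_zero]
      exact hε.le
  have hpa : p a := ⟨fun _ => f a, _, f a, hasYoungKS_const (f a),
    fun x hx => by simp [le_antisymm hx.2 hx.1, hε.le], fun _ _ => rfl⟩
  obtain ⟨φ, I, -, hφ, happrox, -⟩ := real_induction hab hpa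
    (fun t ht hpt => by
      obtain ⟨L, hL⟩ := hf.2 t ht
      rw [nhdsWithin_Ioc_eq_nhdsGT ht.2] at hL
      obtain ⟨s, hs, hosc⟩ := hL.exists_mem_abs_sub_le hε
      obtain ⟨u, htu, hsub⟩ := mem_nhdsGT_iff_exists_Ioo_subset.mp hs
      have hsub' : Ioo t (min u b) ⊆ s := (Ioo_subset_Ioo_right (min_le_left u b)).trans hsub
      exact ⟨min u b, ⟨lt_min htu ht.2, min_le_right u b⟩, hstep t _ ht.1 (lt_min htu ht.2)
        (min_le_right u b) (fun x hx y hy => hosc x (hsub' hx) y (hsub' hy)) hpt⟩)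
    (fun c hc => by
      obtain ⟨L, hL⟩ := hf.1 c hc
      rw [nhdsWithin_Ico_eq_nhdsLT hc.1] at hL
      obtain ⟨s, hs, hosc⟩ := hL.exists_mem_abs_sub_le hε
      obtain ⟨l, hlc, hsub⟩ := mem_nhdsLT_iff_exists_Ioo_subset.mp hs
      refine ⟨l, hlc, fun t ht hat hpt => hstep t c hat ht.2 hc.2 (fun x hx y hy => ?_) hpt⟩
      have hsub' : Ioo t c ⊆ s := (Ioo_subset_Ioo_left ht.1).trans hsub
      exact hosc x (hsub' hx) y (hsub' hy))
  exact ⟨φ, I, hφ, happrox⟩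

/-- The limit is found along Young sums, where refining partitions always exist; the
Kurzweil–Stieltjes sums then follow it, so no existence of `δ`-fine partitions is needed. -/
lemma exists_hasYoungKS_of_forall_approx (hab : a < b) (hg : BoundedVariationOn g (Icc a b))
    (hgl : ∀ t ∈ Ioc a b, Tendsto g (𝓝[<] t) (𝓝 (gl t)))
    (hgr : ∀ t ∈ Ico a b, Tendsto g (𝓝[>] t) (𝓝 (gr t)))
    (happrox : ∀ ε > 0, ∃ φ I, HasYoungKS g gl gr a b φ I ∧ ∀ x ∈ Icc a b, |f x - φ x| ≤ ε) :
    ∃ I, HasYoungKS g gl gr a b f I := by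
  choose φ I hφ hφf using fun n : ℕ => happrox (1 / (n + 1)) Nat.one_div_pos_of_nat
  have he : Tendsto (fun n : ℕ => 1 / ((n : ℝ) + 1) * var g a b) atTop (𝓝 0) := by
    simpa using tendsto_one_div_add_atTop_nhds_zero_nat.mul_const (var g a b)
  have := youngFilter_neBot hab
  obtain ⟨J, hJ, hYJ⟩ := exists_tendsto_of_tendstoUniformly
    (tendstoUniformly_of_abs_sub_le he fun n P => by
      rw [← YS_sub]
      exact abs_YS_le hg hgl hgr P (hφf n))
    fun n => (hφ n).1
  have hRS : TendstoUniformly (fun n (P : TaggedPartition a b) => RS (φ n) g P) (RS f g) atTop :=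
    tendstoUniformly_of_abs_sub_le he fun n P => by
      rw [← RS_sub]
      exact abs_RS_le hg P (hφf n)
  exact ⟨J, hYJ, hRS.tendsto_of_eventually_tendsto (.of_forall fun n => (hφ n).2) hJ⟩

end Approximation

theorem stmt18_general (a b : ℝ) (hab : a < b) (f g gl gr : ℝ → ℝ)
    (hf : Regulated f a b)
    (hgbv : BoundedVariationOn g (Set.Icc a b))
    (hgl : ∀ t ∈ Set.Ioc a b, Filter.Tendsto g (nhdsWithin t (Set.Ico a t)) (nhds (gl t)))
    (hgr : ∀ t ∈ Set.Ico a b, Filter.Tendsto g (nhdsWithin t (Set.Ioc t b)) (nhds (gr t))) :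
    ∃ I : ℝ, HasYoung f gl gr g a b I ∧ HasKS f g a b I := by
  have hgl' : ∀ t ∈ Ioc a b, Tendsto g (𝓝[<] t) (𝓝 (gl t)) := fun t ht => by
    simpa only [nhdsWithin_Ico_eq_nhdsLT ht.1] using hgl t ht
  have hgr' : ∀ t ∈ Ico a b, Tendsto g (𝓝[>] t) (𝓝 (gr t)) := fun t ht => by
    simpa only [nhdsWithin_Ioc_eq_nhdsGT ht.2] using hgr t ht
  obtain ⟨I, hY, hK⟩ := exists_hasYoungKS_of_forall_approx hab hgbv hgl' hgr' fun _ hε =>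
    hf.exists_hasYoungKS_approx hab.le hgl' hgr' hε
  exact ⟨I, hasYoung_iff_tendsto.mpr hY, hasKS_iff_tendsto.mpr hK⟩

/-- for regulated `f` and regulated `g` of bounded variation,
the Young integral `(Y)∫_a^b f dg` and `(K)∫_a^b f dg` both exist and agree
(`gl`, `gr` are the one-sided limit functions of `g`). -/
theorem stmt18 (a b : ℝ) (hab : a < b) (f g gl gr : ℝ → ℝ)
    (hf : Regulated f a b) (hreg : Regulated g a b)
    (hgbv : BoundedVariationOn g (Set.Icc a b))
    (hgl : ∀ t ∈ Set.Ioc a b, Filter.Tendsto g (nhdsWithin t (Set.Ico a t)) (nhds (gl t)))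
    (hgr : ∀ t ∈ Set.Ico a b, Filter.Tendsto g (nhdsWithin t (Set.Ioc t b)) (nhds (gr t))) :
    ∃ I : ℝ, HasYoung f gl gr g a b I ∧ HasKS f g a b I :=
  stmt18_general a b hab f g gl gr hf hgbv hgl hgr
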